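/- Let k and ℓ be integers with 3 ≤ k ≤ ℓ and let H_{k,ℓ} be the graph described in the context. Then for every choice of vertices x_i ∈ {t_{i,1}, t_{i,2}} for i = 1,…,k−1, the set {v, x_1,…,x_{k−1}} is a total dominating set of H_{k,ℓ} of cardinality k; moreover, for every choice of vertices x_i ∈ {t_{i,1}, t_{i,2}} for i = k,…,k+ℓ−2, the set {w, x_k,…,x_{k+ℓ−2}} is a total dominating set of H_{k,ℓ} of cardinality ℓ. -/

import Mathlib

/-- The three special vertices `u`, `v`, `w`. -/
inductive UVW : Type
  | u | v | w
deriving DecidableEq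

/-- Vertices of `H_{k,ℓ}`: triangle vertices `t_{i,j}` as `Sum.inl (i,j)`
(0-indexed, `i : Fin (k+ℓ-2)`, `j : Fin 3`), plus `u`, `v`, `w`. -/
abbrev HklV (k l : ℕ) := (Fin (k + l - 2) × Fin 3) ⊕ UVW

/-- Edge relation of `H_{k,ℓ}`: triangles on each `t_{i,·}`; the edge `uv`;
`u` adjacent to `t_{i,1}` (0-indexed `j = 0`) for all `i` and to `t_{i,2}`,
`t_{i,3}` for `i ≥ k` (0-indexed `k-1 ≤ i.val`); `v` adjacent to `t_{i,1}`,
`t_{i,2}` for all `i` and to `t_{i,3}` for `i ≥ k`; `w` adjacent to `t_{i,1}`,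
`t_{i,2}` for all `i` and to `t_{i,3}` for `i ≤ k-1` (0-indexed
`i.val < k-1`); `w` adjacent to neither `u` nor `v`. -/
def HklRel (k l : ℕ) : HklV k l → HklV k l → Prop
  | .inl p, .inl q => p.1 = q.1
  | .inr .u, .inl p =>
      p.2.val = 0 ∨ (k - 1 ≤ p.1.val ∧ (p.2.val = 1 ∨ p.2.val = 2))
  | .inr .v, .inl p =>
      p.2.val = 0 ∨ p.2.val = 1 ∨ (k - 1 ≤ p.1.val ∧ p.2.val = 2)
  | .inr .w, .inl p =>
      p.2.val = 0 ∨ p.2.val = 1 ∨ (p.1.val < k - 1 ∧ p.2.val = 2)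
  | .inr .u, .inr .v => True
  | _, _ => False

/-- The graph `H_{k,ℓ}`. -/
def Hkl (k l : ℕ) : SimpleGraph (HklV k l) := SimpleGraph.fromRel (HklRel k l)

/-- `D` is a total dominating set of `G`. -/
def IsTotalDomSet {V : Type*} (G : SimpleGraph V) (D : Finset V) : Prop :=
  ∀ v : V, ∃ d ∈ D, G.Adj v d

/-!
Write `hub` for `v` (resp. `w`) and `x_i = t_{i, c i}`. The hub is adjacent to `t_{i,1}` and
`t_{i,2}` for every `i`, so each `x_i` is dominated by the hub and the rest of its triangle by
`x_i`. Every other triangle lies entirely in the hub's neighbourhood: `v` sees all of `t_{i,·}`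
for `i ≥ k`, and `w` for `i ≤ k - 1`. Finally `u`, `v`, `w` are dominated through the edge `uv`
or by `x_1` (resp. `x_k`), which exists as `k ≥ 2` (resp. `ℓ ≥ 2`).
-/

open Finset

theorem Fin.card_filter_le_val (n m : ℕ) : #{i : Fin n | m ≤ (i : ℕ)} = n - m := by
  have h := card_filter_add_card_filter_not
    (s := (univ : Finset (Fin n))) (p := fun i : Fin n => (i : ℕ) < m)
  simp only [not_lt, card_univ, Fintype.card_fin, Fin.card_filter_val_lt] at h
  omega

namespace Hkl

variable {k l : ℕ}

theorem adj_inl_inl {p q : Fin (k + l - 2) × Fin 3} :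
    (Hkl k l).Adj (.inl p) (.inl q) ↔ p ≠ q ∧ p.1 = q.1 := by
  simp [Hkl, HklRel, eq_comm]

theorem adj_inl_inr {p : Fin (k + l - 2) × Fin 3} {x : UVW} :
    (Hkl k l).Adj (.inl p) (.inr x) ↔ HklRel k l (.inr x) (.inl p) := by
  simp [Hkl, HklRel]

theorem adj_inl_u {p : Fin (k + l - 2) × Fin 3} :
    (Hkl k l).Adj (.inl p) (.inr .u) ↔ p.2.val = 0 ∨ k - 1 ≤ p.1.val := by
  have := p.2.isLt
  simp only [adj_inl_inr, HklRel]
  omega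

theorem adj_inl_v {p : Fin (k + l - 2) × Fin 3} :
    (Hkl k l).Adj (.inl p) (.inr .v) ↔ p.2.val < 2 ∨ k - 1 ≤ p.1.val := by
  have := p.2.isLt
  simp only [adj_inl_inr, HklRel]
  omega

theorem adj_inl_w {p : Fin (k + l - 2) × Fin 3} :
    (Hkl k l).Adj (.inl p) (.inr .w) ↔ p.2.val < 2 ∨ p.1.val < k - 1 := by
  have := p.2.isLt
  simp only [adj_inl_inr, HklRel]
  omega

theorem adj_u_v : (Hkl k l).Adj (.inr .u) (.inr .v) := by
  simp [Hkl, HklRel]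

def hubSet (hub : UVW) (P : Fin (k + l - 2) → Prop) [DecidablePred P]
    (c : Fin (k + l - 2) → Fin 3) : Finset (HklV k l) :=
  insert (.inr hub) ((univ.filter P).image fun i => .inl (i, c i))

variable {hub : UVW} {P : Fin (k + l - 2) → Prop} [DecidablePred P]
  {c : Fin (k + l - 2) → Fin 3}

theorem inr_mem_hubSet : .inr hub ∈ hubSet hub P c := mem_insert_self _ _

theorem inl_mem_hubSet {i : Fin (k + l - 2)} (hi : P i) : .inl (i, c i) ∈ hubSet hub P c :=
  mem_insert_of_mem (mem_image_of_mem _ (mem_filter.mpr ⟨mem_univ i, hi⟩))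

theorem card_hubSet : #(hubSet hub P c) = #(univ.filter P) + 1 := by
  rw [hubSet, card_insert_of_notMem (by simp), card_image_of_injective]
  intro i j h
  exact (Prod.ext_iff.mp (Sum.inl_injective h)).1

theorem exists_adj_inl_of_hub (hc : ∀ i, P i → (c i).val < 2)
    (hhub : ∀ p : Fin (k + l - 2) × Fin 3,
      p.2.val < 2 ∨ ¬ P p.1 → (Hkl k l).Adj (.inl p) (.inr hub))
    (p : Fin (k + l - 2) × Fin 3) : ∃ d ∈ hubSet hub P c, (Hkl k l).Adj (.inl p) d := by
  obtain ⟨i, j⟩ := p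
  by_cases hi : P i
  · by_cases hj : j = c i
    · subst hj
      exact ⟨_, inr_mem_hubSet, hhub _ (.inl (hc i hi))⟩
    · exact ⟨_, inl_mem_hubSet hi, adj_inl_inl.mpr ⟨by simpa using hj, rfl⟩⟩
  · exact ⟨_, inr_mem_hubSet, hhub _ (.inr hi)⟩

theorem isTotalDomSet_hubSet_v (hk : 2 ≤ k) (hl : 1 ≤ l)
    (hc : ∀ i, i.val < k - 1 → (c i).val < 2) :
    IsTotalDomSet (Hkl k l) (hubSet .v (fun i => i.val < k - 1) c) := by
  have h₀ : 0 < k - 1 := by omega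
  let i₀ : Fin (k + l - 2) := ⟨0, by omega⟩
  have hmem : .inl (i₀, c i₀) ∈ hubSet .v (fun i => i.val < k - 1) c := inl_mem_hubSet h₀
  rintro (p | _ | _ | _)
  · exact exists_adj_inl_of_hub hc (fun p hp => adj_inl_v.mpr (by omega)) p
  · exact ⟨_, inr_mem_hubSet, adj_u_v⟩
  · exact ⟨_, hmem, (adj_inl_v.mpr (.inl (hc i₀ h₀))).symm⟩
  · exact ⟨_, hmem, (adj_inl_w.mpr (.inl (hc i₀ h₀))).symm⟩

theorem isTotalDomSet_hubSet_w (hk : 1 ≤ k) (hl : 2 ≤ l)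
    (hc : ∀ i, k - 1 ≤ i.val → (c i).val < 2) :
    IsTotalDomSet (Hkl k l) (hubSet .w (fun i => k - 1 ≤ i.val) c) := by
  let i₀ : Fin (k + l - 2) := ⟨k - 1, by omega⟩
  have h₀ : k - 1 ≤ i₀.val := le_rfl
  have hmem : .inl (i₀, c i₀) ∈ hubSet .w (fun i => k - 1 ≤ i.val) c := inl_mem_hubSet h₀
  rintro (p | _ | _ | _)
  · exact exists_adj_inl_of_hub hc (fun p hp => adj_inl_w.mpr (by omega)) p
  · exact ⟨_, hmem, (adj_inl_u.mpr (.inr h₀)).symm⟩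
  · exact ⟨_, hmem, (adj_inl_v.mpr (.inl (hc i₀ h₀))).symm⟩
  · exact ⟨_, hmem, (adj_inl_w.mpr (.inl (hc i₀ h₀))).symm⟩

theorem card_hubSet_lt (hk : 1 ≤ k) (hl : 1 ≤ l) :
    #(hubSet hub (fun i => i.val < k - 1) c) = k := by
  rw [card_hubSet, Fin.card_filter_val_lt]
  omega

theorem card_hubSet_le (hk : 1 ≤ k) (hl : 1 ≤ l) :
    #(hubSet hub (fun i => k - 1 ≤ i.val) c) = l := by
  rw [card_hubSet, Fin.card_filter_le_val]
  omega

end Hkl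

open Hkl in
/-- For every choice `x_i ∈ {t_{i,1}, t_{i,2}}` for `i = 1, …, k-1` (0-indexed
`i.val < k-1`), the set `{v, x_1, …, x_{k-1}}` is a total dominating set of
`H_{k,ℓ}` of cardinality `k`; and for every choice `x_i ∈ {t_{i,1}, t_{i,2}}`
for `i = k, …, k+ℓ-2` (0-indexed `k-1 ≤ i.val`), the set
`{w, x_k, …, x_{k+ℓ-2}}` is a total dominating set of `H_{k,ℓ}` of
cardinality `ℓ`. -/
theorem stmt16 (k l : ℕ) (hk : 3 ≤ k) (hkl : k ≤ l) :
    (∀ (c : Fin (k + l - 2) → Fin 3),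
      (∀ i, i.val < k - 1 → (c i).val = 0 ∨ (c i).val = 1) →
      ∀ D : Finset (HklV k l),
        D = insert (Sum.inr UVW.v)
          (Finset.image (fun i => Sum.inl (i, c i))
            (Finset.univ.filter (fun i : Fin (k + l - 2) => i.val < k - 1))) →
        IsTotalDomSet (Hkl k l) D ∧ D.card = k) ∧
    (∀ (c : Fin (k + l - 2) → Fin 3),
      (∀ i, k - 1 ≤ i.val → (c i).val = 0 ∨ (c i).val = 1) →
      ∀ D : Finset (HklV k l),
        D = insert (Sum.inr UVW.w)
          (Finset.image (fun i => Sum.inl (i, c i))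
            (Finset.univ.filter (fun i : Fin (k + l - 2) => k - 1 ≤ i.val))) →
        IsTotalDomSet (Hkl k l) D ∧ D.card = l) := by
  refine ⟨fun c hc D hD => ?_, fun c hc D hD => ?_⟩ <;> subst hD
  · exact ⟨isTotalDomSet_hubSet_v (by omega) (by omega) fun i hi => by have := hc i hi; omega,
      card_hubSet_lt (by omega) (by omega)⟩
  · exact ⟨isTotalDomSet_hubSet_w (by omega) (by omega) fun i hi => by have := hc i hi; omega,
      card_hubSet_le (by omega) (by omega)⟩
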